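/- arXiv:2208.14425 — 4 statements merged into one kernel-verified Lean document; each statement's English description precedes it below -/
import Mathlib

section
/- Let m = Σ_{j≥2} j μ(j). If p > 0 or m > 1, then lim_{x→∞} W(x) = ∞. If p = 0 and m < 1, then ψ'(1) = α(m − 1) < 0 and lim_{x→∞} W(x) = −1/ψ'(1). -/
open Set Filter Topology
open scoped ENNReal

set_option maxHeartbeats 1000000

open Set Filter Topology
open scoped ENNReal

lemma aux_Tid (μ μbar : ℕ → ℝ) (hbar : ∀ k, μbar k = 1 - ∑ j ∈ Finset.range (k+1), μ j) :
    ∀ M : ℕ, ∑ i ∈ Finset.range M, μbar i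
      = (M : ℝ) * μbar M + ∑ j ∈ Finset.range (M+1), (j : ℝ) * μ j := by
  have hstep : ∀ M, μbar (M+1) = μbar M - μ (M+1) := by
    intro M; rw [hbar, hbar, Finset.sum_range_succ]; ring
  intro M; induction M with
  | zero => simp
  | succ M ih =>
    rw [Finset.sum_range_succ, ih, Finset.sum_range_succ (fun j => (j:ℝ) * μ j) (M+1), hstep]
    push_cast; ring

lemma aux_renewal (a : ℝ) (ha : a ≠ 0) (c ΔW W : ℕ → ℝ)
    (hrec : ∀ k, ΔW (k+1) = (1/a) * ∑ j ∈ Finset.range (k+1), ΔW j * c (k - j + 1))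
    (hW : ∀ k, W k = ∑ j ∈ Finset.range (k+1), ΔW j) :
    ∀ N, a * W N = a * ΔW 0
      + ∑ j ∈ Finset.range N, ΔW j * (∑ i ∈ Finset.range (N - j), c (i+1)) := by
  intro N; induction N with
  | zero => simp [hW]
  | succ N ih =>
    have h1 : a * ΔW (N+1) = ∑ j ∈ Finset.range (N+1), ΔW j * c (N - j + 1) := by
      rw [hrec]; field_simp
    have h2 : ∀ j ∈ Finset.range (N+1),
        ΔW j * (∑ i ∈ Finset.range (N + 1 - j), c (i+1))
          = ΔW j * (∑ i ∈ Finset.range (N - j), c (i+1)) + ΔW j * c (N - j + 1) := by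
      intro j hj
      have hj' : j ≤ N := by simpa [Nat.lt_succ_iff] using hj
      have hNj : N + 1 - j = (N - j) + 1 := by omega
      rw [hNj, Finset.sum_range_succ]; ring
    have h3 : ∑ j ∈ Finset.range (N+1), ΔW j * (∑ i ∈ Finset.range (N + 1 - j), c (i+1))
        = ∑ j ∈ Finset.range (N+1), ΔW j * (∑ i ∈ Finset.range (N - j), c (i+1))
          + ∑ j ∈ Finset.range (N+1), ΔW j * c (N - j + 1) := by
      rw [← Finset.sum_add_distrib]; exact Finset.sum_congr rfl h2
    have h4 : W (N+1) = W N + ΔW (N+1) := by rw [hW, hW, Finset.sum_range_succ]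
    have h5 : ∑ j ∈ Finset.range (N+1), ΔW j * (∑ i ∈ Finset.range (N - j), c (i+1))
        = ∑ j ∈ Finset.range N, ΔW j * (∑ i ∈ Finset.range (N - j), c (i+1)) := by
      rw [Finset.sum_range_succ]; simp
    rw [h4, mul_add, ih, h3, h5, h1]; ring

lemma aux_conv (μ0 : ℝ) (hμ0 : 0 < μ0) (ΔW W : ℕ → ℝ) (S : ℕ → ℝ) (σ : ℝ)
    (hΔnn : ∀ j, 0 ≤ ΔW j) (hW : ∀ k, W k = ∑ j ∈ Finset.range (k+1), ΔW j)
    (hid : ∀ N, μ0 * W N = μ0 * ΔW 0 + ∑ j ∈ Finset.range N, ΔW j * S (N - j))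
    (hSnn : ∀ M, 0 ≤ S M) (hSle : ∀ M, S M ≤ σ) (hStend : Tendsto S atTop (𝓝 σ))
    (hσ : σ < μ0) :
    Tendsto W atTop (𝓝 (μ0 * ΔW 0 / (μ0 - σ))) := by
  have hσnn : 0 ≤ σ := le_trans (hSnn 0) (hSle 0)
  have hWmono : Monotone W := by
    apply monotone_nat_of_le_succ
    intro n
    rw [hW, hW]
    exact Finset.sum_le_sum_of_subset_of_nonneg (Finset.range_subset_range.2 (by omega))
      (fun i _ _ => hΔnn i)
  have hup : ∀ N, μ0 * W N ≤ μ0 * ΔW 0 + σ * W N := by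
    intro N
    rw [hid]
    have h1 : ∑ j ∈ Finset.range N, ΔW j * S (N - j) ≤ ∑ j ∈ Finset.range N, ΔW j * σ :=
      Finset.sum_le_sum fun j _ => mul_le_mul_of_nonneg_left (hSle _) (hΔnn j)
    have h2 : ∑ j ∈ Finset.range N, ΔW j * σ = (∑ j ∈ Finset.range N, ΔW j) * σ :=
      (Finset.sum_mul ..).symm
    have h3 : ∑ j ∈ Finset.range N, ΔW j ≤ W N := by
      rw [hW]
      exact Finset.sum_le_sum_of_subset_of_nonneg
        (Finset.range_subset_range.2 (Nat.le_succ N)) (fun i _ _ => hΔnn i)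
    nlinarith [hσnn]
  have hbd : ∀ N, W N ≤ μ0 * ΔW 0 / (μ0 - σ) := by
    intro N
    rw [le_div_iff₀ (by linarith)]
    have := hup N; nlinarith
  have hbdd : BddAbove (Set.range W) := ⟨_, forall_mem_range.2 hbd⟩
  set L := ⨆ n, W n with hL
  have hten : Tendsto W atTop (𝓝 L) := tendsto_atTop_ciSup hWmono hbdd
  have hupL : μ0 * L ≤ μ0 * ΔW 0 + σ * L := by
    refine le_of_tendsto_of_tendsto (hten.const_mul μ0)
      (tendsto_const_nhds.add (hten.const_mul σ)) (Eventually.of_forall hup)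
  have hlowJ : ∀ J, μ0 * ΔW 0 + σ * W J ≤ μ0 * L := by
    intro J
    have h1 : Tendsto (fun N => μ0 * ΔW 0 + ∑ j ∈ Finset.range (J+1), ΔW j * S (N - j))
        atTop (𝓝 (μ0 * ΔW 0 + ∑ j ∈ Finset.range (J+1), ΔW j * σ)) := by
      refine tendsto_const_nhds.add (tendsto_finset_sum _ fun j _ => ?_)
      exact (hStend.comp (tendsto_sub_atTop_nat j)).const_mul _
    have h2 : ∑ j ∈ Finset.range (J+1), ΔW j * σ = σ * W J := by
      rw [hW, Finset.mul_sum]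
      exact Finset.sum_congr rfl fun j _ => mul_comm _ _
    rw [h2] at h1
    refine le_of_tendsto_of_tendsto h1 (hten.const_mul μ0) ?_
    filter_upwards [eventually_ge_atTop (J+1)] with N hN
    rw [hid]
    have := Finset.sum_le_sum_of_subset_of_nonneg (f := fun j => ΔW j * S (N - j))
      (Finset.range_subset_range.2 hN) (fun i _ _ => mul_nonneg (hΔnn i) (hSnn _))
    linarith
  have hlowL : μ0 * ΔW 0 + σ * L ≤ μ0 * L :=
    le_of_tendsto_of_tendsto (tendsto_const_nhds.add (hten.const_mul σ))
      (tendsto_const_nhds) (Eventually.of_forall hlowJ)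
  have hLeq : L = μ0 * ΔW 0 / (μ0 - σ) := by
    have heq : μ0 * L = μ0 * ΔW 0 + σ * L := le_antisymm hupL hlowL
    rw [eq_div_iff (by linarith : μ0 - σ ≠ 0)]
    linarith
  rw [← hLeq]; exact hten

open Set Filter Topology

lemma aux_deriv (μ : ℕ → ℝ) (hnn : ∀ j, 0 ≤ μ j) (hsum : Summable μ)
    (htsum : ∑' j, μ j = 1) (mr : ℝ)
    (hg : Summable (fun j : ℕ => (j:ℝ) * μ j)) (hgt : ∑' j : ℕ, (j:ℝ) * μ j = mr) :
    HasDerivWithinAt (fun s : ℝ => ∑' j, μ j * s ^ j) mr (Iic 1) 1 := by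
  set F : ℝ → ℝ := fun s => ∑' j, μ j * s ^ j with hF
  set G : ℝ → ℝ := fun s => ∑' j, μ j * ∑ i ∈ Finset.range j, s ^ i with hG
  have hIio : (Iic (1:ℝ)) \ {1} = Iio 1 := by ext x; simp [lt_iff_le_and_ne]
  rw [hasDerivWithinAt_iff_tendsto_slope, hIio]
  -- summability lemmas on [0,1)
  have hsF : ∀ s ∈ Ico (0:ℝ) 1, Summable (fun j => μ j * s ^ j) := by
    intro s hs
    refine Summable.of_nonneg_of_le (fun j => mul_nonneg (hnn j) (pow_nonneg hs.1 j)) (fun j => ?_) hsum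
    calc μ j * s ^ j ≤ μ j * 1 :=
          mul_le_mul_of_nonneg_left (pow_le_one₀ hs.1 hs.2.le) (hnn j)
      _ = μ j := mul_one _
  have hgeom_le : ∀ s ∈ Ico (0:ℝ) 1, ∀ j : ℕ, (∑ i ∈ Finset.range j, s ^ i) ≤ j := by
    intro s hs j
    calc ∑ i ∈ Finset.range j, s ^ i ≤ ∑ i ∈ Finset.range j, 1 :=
          Finset.sum_le_sum fun i _ => pow_le_one₀ hs.1 hs.2.le
      _ = j := by simp
  have hgeom_nn : ∀ s ∈ Ico (0:ℝ) 1, ∀ j : ℕ, 0 ≤ ∑ i ∈ Finset.range j, s ^ i := by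
    intro s hs j
    exact Finset.sum_nonneg fun i _ => pow_nonneg hs.1 i
  have hsG : ∀ s ∈ Ico (0:ℝ) 1, Summable (fun j => μ j * ∑ i ∈ Finset.range j, s ^ i) := by
    intro s hs
    refine Summable.of_nonneg_of_le (fun j => mul_nonneg (hnn j) (hgeom_nn s hs j))
      (fun j => ?_) hg
    calc μ j * ∑ i ∈ Finset.range j, s ^ i ≤ μ j * j :=
          mul_le_mul_of_nonneg_left (hgeom_le s hs j) (hnn j)
      _ = (j:ℝ) * μ j := mul_comm _ _
  have hF1 : F 1 = 1 := by simp [hF, htsum]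
  -- slope equals G on Ico 0 1
  have hslope : ∀ s ∈ Ico (0:ℝ) 1, slope F 1 s = G s := by
    intro s hs
    rw [slope_def_field, hF1]
    have hkey : ∀ j : ℕ, μ j * s ^ j - μ j
        = (μ j * ∑ i ∈ Finset.range j, s ^ i) * (s - 1) := by
      intro j
      have h := geom_sum_mul s j
      calc μ j * s ^ j - μ j = μ j * (s ^ j - 1) := by ring
        _ = μ j * ((∑ i ∈ Finset.range j, s ^ i) * (s - 1)) := by rw [h]
        _ = (μ j * ∑ i ∈ Finset.range j, s ^ i) * (s - 1) := by ring
    have hnum : F s - 1 = G s * (s - 1) := by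
      have h1 : F s - 1 = ∑' j, (μ j * s ^ j - μ j) := by
        rw [Summable.tsum_sub (hsF s hs) hsum, htsum]
      rw [h1]
      have h2 : ∀ j : ℕ, μ j * s ^ j - μ j
          = (μ j * ∑ i ∈ Finset.range j, s ^ i) * (s - 1) := hkey
      rw [tsum_congr h2, tsum_mul_right]
    rw [hnum]
    have hs1 : s - 1 ≠ 0 := by
      have := hs.2; intro h; apply absurd this; push_neg; linarith
    field_simp
  -- G tends to mr
  have hGtend : Tendsto G (𝓝[Iio (1:ℝ)] 1) (𝓝 mr) := by
    rw [Metric.tendsto_nhds]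
    intro ε hε
    -- choose J with small tail
    have htail : Tendsto (fun J => ∑ j ∈ Finset.range J, (j:ℝ) * μ j) atTop (𝓝 mr) := by
      simpa [hgt] using hg.hasSum.tendsto_sum_nat
    have hevJ : ∀ᶠ J in atTop, |(∑ j ∈ Finset.range J, (j:ℝ) * μ j) - mr| < ε/4 := by
      have := (Metric.tendsto_nhds.1 htail) (ε/4) (by linarith)
      simpa [Real.dist_eq] using this
    obtain ⟨J, hJ⟩ := hevJ.exists
    set P := ∑ j ∈ Finset.range J, (j:ℝ) * μ j with hP
    -- continuity of the finite sum
    have hcont : Tendsto (fun s : ℝ => ∑ j ∈ Finset.range J, μ j * ∑ i ∈ Finset.range j, s ^ i)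
        (𝓝[Iio (1:ℝ)] 1) (𝓝 P) := by
      have hc : Continuous (fun s : ℝ => ∑ j ∈ Finset.range J, μ j * ∑ i ∈ Finset.range j, s ^ i) := by
        continuity
      have h2 := (hc.tendsto 1).mono_left (nhdsWithin_le_nhds (s := Iio (1:ℝ)))
      have h1 : ∑ j ∈ Finset.range J, μ j * ∑ i ∈ Finset.range j, (1:ℝ) ^ i = P := by
        simp [hP]
        exact Finset.sum_congr rfl fun j _ => mul_comm _ _
      rw [h1] at h2
      exact h2
    have hev1 : ∀ᶠ s in 𝓝[Iio (1:ℝ)] 1,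
        |(∑ j ∈ Finset.range J, μ j * ∑ i ∈ Finset.range j, s ^ i) - P| < ε/4 := by
      have := (Metric.tendsto_nhds.1 hcont) (ε/4) (by linarith)
      simpa [Real.dist_eq] using this
    have hev2 : ∀ᶠ s in 𝓝[Iio (1:ℝ)] 1, s ∈ Ico (0:ℝ) 1 := by
      have h0 : ∀ᶠ s in 𝓝[Iio (1:ℝ)] 1, (0:ℝ) < s :=
        eventually_nhdsWithin_of_eventually_nhds (eventually_gt_nhds (by norm_num))
      filter_upwards [h0, eventually_mem_nhdsWithin] with s h1 h2
      exact ⟨le_of_lt h1, h2⟩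
    filter_upwards [hev1, hev2] with s hs1 hs2
    -- estimate
    have hGle : G s ≤ mr := by
      rw [← hgt, hG]
      exact Summable.tsum_le_tsum (fun j => by
        calc μ j * ∑ i ∈ Finset.range j, s ^ i ≤ μ j * j :=
              mul_le_mul_of_nonneg_left (hgeom_le s hs2 j) (hnn j)
          _ = (j:ℝ) * μ j := mul_comm _ _) (hsG s hs2) hg
    have hdiff_sum : Summable (fun j : ℕ => (j:ℝ) * μ j - μ j * ∑ i ∈ Finset.range j, s ^ i) :=
      hg.sub (hsG s hs2)
    have hdiff : mr - G s = ∑' j : ℕ, ((j:ℝ) * μ j - μ j * ∑ i ∈ Finset.range j, s ^ i) := by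
      rw [Summable.tsum_sub hg (hsG s hs2), hgt]
    have hsplit : mr - G s
        = (∑ j ∈ Finset.range J, ((j:ℝ) * μ j - μ j * ∑ i ∈ Finset.range j, s ^ i))
          + ∑' i : ℕ, ((↑(i+J):ℝ) * μ (i+J) - μ (i+J) * ∑ k ∈ Finset.range (i+J), s ^ k) := by
      rw [hdiff, ← Summable.sum_add_tsum_nat_add J hdiff_sum]
    have htail_le : (∑' i : ℕ, ((↑(i+J):ℝ) * μ (i+J) - μ (i+J) * ∑ k ∈ Finset.range (i+J), s ^ k))
        ≤ ∑' i : ℕ, (↑(i+J):ℝ) * μ (i+J) := by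
      refine Summable.tsum_le_tsum (fun i => ?_) ((summable_nat_add_iff J).2 hdiff_sum)
        ((summable_nat_add_iff J).2 hg)
      have := mul_nonneg (hnn (i+J)) (hgeom_nn s hs2 (i+J))
      linarith
    have htail_val : (∑' i : ℕ, (↑(i+J):ℝ) * μ (i+J)) = mr - P := by
      have := Summable.sum_add_tsum_nat_add J hg
      rw [hgt] at this
      linarith [this]
    have hfin : (∑ j ∈ Finset.range J, ((j:ℝ) * μ j - μ j * ∑ i ∈ Finset.range j, s ^ i))
        = P - ∑ j ∈ Finset.range J, μ j * ∑ i ∈ Finset.range j, s ^ i := by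
      rw [Finset.sum_sub_distrib]
    have htailP : mr - P < ε/4 := by
      have := abs_lt.1 hJ
      linarith [this.1, this.2]
    have hfin' : (∑ j ∈ Finset.range J, ((j:ℝ) * μ j - μ j * ∑ i ∈ Finset.range j, s ^ i)) < ε/4 := by
      rw [hfin]
      have := abs_lt.1 hs1
      linarith [this.1, this.2]
    have hGmr : mr - G s < ε/2 := by
      rw [hsplit]
      have := htail_le.trans_eq htail_val
      linarith
    rw [Real.dist_eq, abs_of_nonpos (by linarith)]
    linarith
  exact hGtend.congr' (by
    filter_upwards [eventually_nhdsWithin_of_eventually_nhds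
      (eventually_gt_nhds (by norm_num : (0:ℝ) < 1)), eventually_mem_nhdsWithin] with s h1 h2
    exact (hslope s ⟨le_of_lt h1, h2⟩).symm)


theorem stmt_16 (α p : ℝ) (μ : ℕ → ℝ) (ψ : ℝ → ℝ) (s₀ : ℝ)
    (hα : 0 < α) (hp : 0 ≤ p)
    (hμ_nonneg : ∀ j, 0 ≤ μ j) (hμ_sum : ∑' j, μ j = 1)
    (hμ0 : 0 < μ 0) (hμ1 : μ 1 = 0)
    (hψ : ∀ s : ℝ, ψ s = α * ((∑' j, μ j * s ^ j) - s) - p * s)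
    (hs₀ : s₀ = sInf {s : ℝ | 0 < s ∧ ψ s = 0})
    (hs₀_mem : s₀ ∈ Ioc (0:ℝ) 1)
    (hψ_pos : ∀ s ∈ Ico (0:ℝ) s₀, 0 < ψ s)
    (μbar : ℕ → ℝ)
    (hμbar : ∀ k, μbar k = 1 - ∑ j ∈ Finset.range (k+1), μ j)
    (ΔW : ℕ → ℝ)
    (hΔW0 : ΔW 0 = 1 / (α * μ 0))
    (hΔW : ∀ k, ΔW (k+1) = (1 / μ 0) * ∑ j ∈ Finset.range (k+1), ΔW j * (μbar (k - j + 1) + p / α))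
    (W : ℕ → ℝ)
    (hW : ∀ k, W k = ∑ j ∈ Finset.range (k+1), ΔW j)
    (m : ℝ≥0∞) (hm : m = ∑' j : ℕ, (j : ℝ≥0∞) * ENNReal.ofReal (μ j)) :
    ((0 < p ∨ 1 < m) → Tendsto W atTop atTop) ∧
      (p = 0 → m < 1 →
        HasDerivWithinAt ψ (α * (m.toReal - 1)) (Iic 1) 1 ∧
        α * (m.toReal - 1) < 0 ∧
        Tendsto W atTop (nhds (-(1 / (α * (m.toReal - 1)))))) := by
  have hμ_summable : Summable μ := by
    by_contra h
    rw [tsum_eq_zero_of_not_summable h] at hμ_sum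
    norm_num at hμ_sum
  have hpart_le : ∀ n, ∑ j ∈ Finset.range n, μ j ≤ 1 := by
    intro n
    rw [← hμ_sum]
    exact Summable.sum_le_tsum _ (fun i _ => hμ_nonneg i) hμ_summable
  have hbar_nn : ∀ k, 0 ≤ μbar k := by
    intro k; rw [hμbar]; linarith [hpart_le (k+1)]
  have hα' : α ≠ 0 := ne_of_gt hα
  have hμ0' : (μ 0) ≠ 0 := ne_of_gt hμ0
  have hpα : 0 ≤ p / α := div_nonneg hp hα.le
  have hΔnn : ∀ j, 0 ≤ ΔW j := by
    intro j
    induction j using Nat.strong_induction_on with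
    | _ j ih =>
      rcases j with _ | k
      · rw [hΔW0]; positivity
      · show 0 ≤ ΔW (k+1)
        rw [hΔW k]
        refine mul_nonneg (by positivity) (Finset.sum_nonneg fun i hi => ?_)
        exact mul_nonneg (ih i (Finset.mem_range.mp hi)) (add_nonneg (hbar_nn _) hpα)
  have hΔ0pos : 0 < ΔW 0 := by rw [hΔW0]; positivity
  have hWmono : Monotone W := by
    apply monotone_nat_of_le_succ
    intro n
    rw [hW, hW]
    exact Finset.sum_le_sum_of_subset_of_nonneg (Finset.range_subset_range.2 (by omega))
      (fun i _ _ => hΔnn i)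
  have hW0 : W 0 = ΔW 0 := by rw [hW]; simp
  have hbar0 : μbar 0 = 1 - μ 0 := by rw [hμbar]; simp
  have hg_nn : ∀ j : ℕ, (0:ℝ) ≤ (j:ℝ) * μ j := fun j => mul_nonneg (Nat.cast_nonneg j) (hμ_nonneg j)
  constructor
  · -- divergent case
    rintro (hppos | hm1)
    · -- p > 0
      have hrenew : ∀ N, μ 0 * W N = μ 0 * ΔW 0
          + ∑ j ∈ Finset.range N, ΔW j * (∑ i ∈ Finset.range (N - j), (μbar (i+1) + p / α)) :=
        aux_renewal (μ 0) hμ0' (fun i => μbar i + p / α) ΔW W hΔW hW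
      have hepos : 0 < ΔW 0 * (p / α) / μ 0 := by positivity
      refine tendsto_atTop_mono (fun N => ?_)
        (Tendsto.const_mul_atTop hepos tendsto_natCast_atTop_atTop)
      rcases Nat.eq_zero_or_pos N with h0 | hNpos
      · subst h0
        simp only [Nat.cast_zero, mul_zero]
        rw [hW0]; positivity
      · have hSnn : ∀ M : ℕ, 0 ≤ ∑ i ∈ Finset.range M, (μbar (i+1) + p / α) :=
          fun M => Finset.sum_nonneg fun i _ => add_nonneg (hbar_nn _) hpα
        have hterm : ΔW 0 * (∑ i ∈ Finset.range (N - 0), (μbar (i+1) + p / α))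
            ≤ ∑ j ∈ Finset.range N, ΔW j * (∑ i ∈ Finset.range (N - j), (μbar (i+1) + p / α)) :=
          Finset.single_le_sum (fun j _ => mul_nonneg (hΔnn j) (hSnn _))
            (Finset.mem_range.2 hNpos)
        rw [Nat.sub_zero] at hterm
        have hSN : (N:ℝ) * (p/α) ≤ ∑ i ∈ Finset.range N, (μbar (i+1) + p / α) := by
          calc (N:ℝ) * (p/α) = ∑ _i ∈ Finset.range N, (p/α) := by
                rw [Finset.sum_const, nsmul_eq_mul, Finset.card_range]
            _ ≤ _ := Finset.sum_le_sum fun i _ => by linarith [hbar_nn (i+1)]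
        have k1 : ΔW 0 * ((N:ℝ) * (p/α)) ≤ ΔW 0 * ∑ i ∈ Finset.range N, (μbar (i+1) + p / α) :=
          mul_le_mul_of_nonneg_left hSN (hΔnn 0)
        have k2 : (0:ℝ) ≤ μ 0 * ΔW 0 := by positivity
        rw [div_mul_eq_mul_div, div_le_iff₀ hμ0]
        nlinarith [hrenew N, hterm]
    · -- 1 < m
      have hrenew : ∀ N, μ 0 * W N = μ 0 * ΔW 0
          + ∑ j ∈ Finset.range N, ΔW j * (∑ i ∈ Finset.range (N - j), (μbar (i+1) + p / α)) :=
        aux_renewal (μ 0) hμ0' (fun i => μbar i + p / α) ΔW W hΔW hW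
      have hSnn : ∀ M : ℕ, 0 ≤ ∑ i ∈ Finset.range M, (μbar (i+1) + p / α) :=
        fun M => Finset.sum_nonneg fun i _ => add_nonneg (hbar_nn _) hpα
      have htpart : Tendsto (fun n => ∑ j ∈ Finset.range n, (j:ℝ≥0∞) * ENNReal.ofReal (μ j))
          atTop (𝓝 m) := by
        rw [hm]; exact ENNReal.tendsto_nat_tsum _
      have hev : ∀ᶠ n in atTop,
          1 < ∑ j ∈ Finset.range n, (j:ℝ≥0∞) * ENNReal.ofReal (μ j) :=
        htpart.eventually_mem (isOpen_Ioi.mem_nhds hm1)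
      obtain ⟨K0, hK0⟩ := hev.exists
      have hcast : ∀ n, ∑ j ∈ Finset.range n, (j:ℝ≥0∞) * ENNReal.ofReal (μ j)
          = ENNReal.ofReal (∑ j ∈ Finset.range n, (j:ℝ) * μ j) := by
        intro n
        rw [ENNReal.ofReal_sum_of_nonneg (fun i _ => hg_nn i)]
        exact Finset.sum_congr rfl fun j _ => by
          rw [ENNReal.ofReal_mul (Nat.cast_nonneg j), ENNReal.ofReal_natCast]
      set K := K0 + 1 with hK
      have hA : 1 < ∑ j ∈ Finset.range K, (j:ℝ) * μ j := by
        have h1 : 1 < ENNReal.ofReal (∑ j ∈ Finset.range K0, (j:ℝ) * μ j) := by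
          rw [← hcast]; exact hK0
        have h2 : 1 < ∑ j ∈ Finset.range K0, (j:ℝ) * μ j := by
          by_contra hle
          push_neg at hle
          exact absurd h1 (not_lt.2 (ENNReal.ofReal_le_one.2 hle))
        calc (1:ℝ) < ∑ j ∈ Finset.range K0, (j:ℝ) * μ j := h2
          _ ≤ ∑ j ∈ Finset.range K, (j:ℝ) * μ j :=
            Finset.sum_le_sum_of_subset_of_nonneg (Finset.range_subset_range.2 (by omega))
              (fun i _ _ => hg_nn i)
      set A := ∑ j ∈ Finset.range K, (j:ℝ) * μ j with hAdef
      have hSge : ∀ M, K ≤ M → μ 0 + (A - 1) ≤ ∑ i ∈ Finset.range M, (μbar (i+1) + p / α) := by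
        intro M hM
        have h1 := aux_Tid μ μbar hμbar (M+1)
        have h2 : ∑ i ∈ Finset.range (M+1), μbar i
            = (∑ i ∈ Finset.range M, μbar (i+1)) + μbar 0 := Finset.sum_range_succ' μbar M
        have h4 : A ≤ ∑ j ∈ Finset.range (M+1+1), (j:ℝ) * μ j := by
          rw [hAdef]
          exact Finset.sum_le_sum_of_subset_of_nonneg (Finset.range_subset_range.2 (by omega))
            (fun i _ _ => hg_nn i)
        have h5 : (0:ℝ) ≤ ((M+1:ℕ):ℝ) * μbar (M+1) :=
          mul_nonneg (Nat.cast_nonneg _) (hbar_nn _)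
        have h6 : ∑ i ∈ Finset.range M, μbar (i+1)
            ≤ ∑ i ∈ Finset.range M, (μbar (i+1) + p / α) :=
          Finset.sum_le_sum fun i _ => by linarith
        rw [h2, hbar0] at h1
        linarith
      by_contra hnot
      have hbdd : BddAbove (Set.range W) := by
        by_contra hbd
        apply hnot
        refine hWmono.tendsto_atTop_atTop fun b => ?_
        obtain ⟨y, ⟨n, rfl⟩, hy⟩ := not_bddAbove_iff.1 hbd b
        exact ⟨n, hy.le⟩
      set L := ⨆ n, W n with hL
      have hten : Tendsto W atTop (𝓝 L) := tendsto_atTop_ciSup hWmono hbdd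
      have key : ∀ N, K ≤ N → μ 0 * ΔW 0 + (μ 0 + (A-1)) * W (N - K) ≤ μ 0 * W N := by
        intro N hN
        rw [hrenew N]
        have h1 : ∀ j ∈ Finset.range (N - K + 1),
            ΔW j * (μ 0 + (A-1)) ≤ ΔW j * (∑ i ∈ Finset.range (N - j), (μbar (i+1) + p / α)) := by
          intro j hj
          have hj' : j ≤ N - K := by
            have := Finset.mem_range.mp hj; omega
          exact mul_le_mul_of_nonneg_left (hSge _ (by omega)) (hΔnn j)
        have h2 : (μ 0 + (A-1)) * W (N - K)
            = ∑ j ∈ Finset.range (N - K + 1), ΔW j * (μ 0 + (A-1)) := by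
          rw [mul_comm, hW, Finset.sum_mul]
        have h3 : ∑ j ∈ Finset.range (N - K + 1),
              ΔW j * (∑ i ∈ Finset.range (N - j), (μbar (i+1) + p / α))
            ≤ ∑ j ∈ Finset.range N,
              ΔW j * (∑ i ∈ Finset.range (N - j), (μbar (i+1) + p / α)) :=
          Finset.sum_le_sum_of_subset_of_nonneg (Finset.range_subset_range.2 (by omega))
            (fun i _ _ => mul_nonneg (hΔnn i) (hSnn _))
        have h4 := Finset.sum_le_sum h1
        linarith
      have h1 : Tendsto (fun N => μ 0 * ΔW 0 + (μ 0 + (A-1)) * W (N - K)) atTop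
          (𝓝 (μ 0 * ΔW 0 + (μ 0 + (A-1)) * L)) :=
        tendsto_const_nhds.add ((hten.comp (tendsto_sub_atTop_nat K)).const_mul _)
      have h2 : Tendsto (fun N => μ 0 * W N) atTop (𝓝 (μ 0 * L)) := hten.const_mul _
      have hfinal : μ 0 * ΔW 0 + (μ 0 + (A-1)) * L ≤ μ 0 * L :=
        le_of_tendsto_of_tendsto h1 h2
          (by filter_upwards [eventually_ge_atTop K] with N hN using key N hN)
      have hL0 : ΔW 0 ≤ L := hW0 ▸ le_ciSup hbdd 0
      nlinarith [mul_pos (sub_pos.2 hA) (lt_of_lt_of_le hΔ0pos hL0), mul_pos hμ0 hΔ0pos]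
  · -- convergent case
    intro hp0 hmlt
    subst hp0
    set mr := m.toReal with hmr
    have hm_ne : m ≠ ⊤ := (hmlt.trans_le le_top).ne
    have hofg : ∀ j : ℕ, (j:ℝ≥0∞) * ENNReal.ofReal (μ j) = ENNReal.ofReal ((j:ℝ) * μ j) :=
      fun j => by rw [ENNReal.ofReal_mul (Nat.cast_nonneg j), ENNReal.ofReal_natCast]
    have hpartg : ∀ n, ∑ j ∈ Finset.range n, (j:ℝ) * μ j ≤ mr := by
      intro n
      rw [← ENNReal.ofReal_le_iff_le_toReal hm_ne,
        ENNReal.ofReal_sum_of_nonneg (fun i _ => hg_nn i)]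
      calc ∑ j ∈ Finset.range n, ENNReal.ofReal ((j:ℝ) * μ j)
          = ∑ j ∈ Finset.range n, (j:ℝ≥0∞) * ENNReal.ofReal (μ j) :=
            Finset.sum_congr rfl fun j _ => (hofg j).symm
        _ ≤ ∑' j : ℕ, (j:ℝ≥0∞) * ENNReal.ofReal (μ j) := ENNReal.sum_le_tsum _
        _ = m := hm.symm
    have hg_sum : Summable (fun j : ℕ => (j:ℝ) * μ j) :=
      summable_of_sum_range_le hg_nn hpartg
    have hg_tsum : ∑' j : ℕ, (j:ℝ) * μ j = mr := by
      have h1 : ENNReal.ofReal (∑' j : ℕ, (j:ℝ) * μ j) = m := by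
        rw [ENNReal.ofReal_tsum_of_nonneg hg_nn hg_sum, hm]
        exact tsum_congr fun j => (hofg j).symm
      have h2 := congrArg ENNReal.toReal h1
      rwa [ENNReal.toReal_ofReal (tsum_nonneg hg_nn)] at h2
    have hmrlt : mr < 1 := by
      have := (ENNReal.toReal_lt_toReal hm_ne ENNReal.one_ne_top).2 hmlt
      simpa using this
    have hmrnn : 0 ≤ mr := ENNReal.toReal_nonneg
    have hbar_eq : ∀ M, μbar M = ∑' i : ℕ, μ (i + (M+1)) := by
      intro M
      have h1 := Summable.sum_add_tsum_nat_add (M+1) hμ_summable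
      rw [hμ_sum] at h1
      rw [hμbar]
      linarith
    have hμshift : ∀ M : ℕ, Summable (fun i : ℕ => μ (i + M)) :=
      fun M => (summable_nat_add_iff M).2 hμ_summable
    have hgshift : ∀ M : ℕ, Summable (fun i : ℕ => ((i + M : ℕ):ℝ) * μ (i + M)) :=
      fun M => (summable_nat_add_iff M).2 hg_sum
    have hMbar : ∀ M : ℕ, (M:ℝ) * μbar M ≤ mr - ∑ j ∈ Finset.range (M+1), (j:ℝ) * μ j := by
      intro M
      have h1 : (M:ℝ) * μbar M = ∑' i : ℕ, (M:ℝ) * μ (i + (M+1)) := by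
        rw [hbar_eq, tsum_mul_left]
      have h2 : (∑' i : ℕ, (M:ℝ) * μ (i + (M+1)))
          ≤ ∑' i : ℕ, ((i + (M+1) : ℕ):ℝ) * μ (i + (M+1)) := by
        refine Summable.tsum_le_tsum (fun i => ?_) ((hμshift (M+1)).mul_left _) (hgshift (M+1))
        refine mul_le_mul_of_nonneg_right ?_ (hμ_nonneg _)
        exact_mod_cast Nat.le_add_left M (i + 1) |>.trans (by omega)
      have h3 := Summable.sum_add_tsum_nat_add (M+1) hg_sum
      rw [hg_tsum] at h3
      linarith
    have hΔW' : ∀ k, ΔW (k+1) = (1 / μ 0) * ∑ j ∈ Finset.range (k+1), ΔW j * μbar (k - j + 1) := by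
      intro k
      simpa using hΔW k
    have hrenew2 : ∀ N, μ 0 * W N = μ 0 * ΔW 0
        + ∑ j ∈ Finset.range N, ΔW j * (∑ i ∈ Finset.range (N - j), μbar (i+1)) :=
      aux_renewal (μ 0) hμ0' μbar ΔW W hΔW' hW
    have hS_eq : ∀ M : ℕ, (∑ i ∈ Finset.range M, μbar (i+1))
        = ((M+1:ℕ):ℝ) * μbar (M+1) + (∑ j ∈ Finset.range (M+2), (j:ℝ) * μ j) - (1 - μ 0) := by
      intro M
      have h1 := aux_Tid μ μbar hμbar (M+1)
      have h2 : ∑ i ∈ Finset.range (M+1), μbar i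
          = (∑ i ∈ Finset.range M, μbar (i+1)) + μbar 0 := Finset.sum_range_succ' μbar M
      rw [h2, hbar0] at h1
      linarith
    have hSnn : ∀ M : ℕ, (0:ℝ) ≤ ∑ i ∈ Finset.range M, μbar (i+1) :=
      fun M => Finset.sum_nonneg fun i _ => hbar_nn _
    have hSle : ∀ M : ℕ, (∑ i ∈ Finset.range M, μbar (i+1)) ≤ mr - 1 + μ 0 := by
      intro M
      have h1 := hS_eq M
      have h2 := hMbar (M+1)
      linarith
    have hpt : Tendsto (fun M : ℕ => ∑ j ∈ Finset.range (M+2), (j:ℝ) * μ j) atTop (𝓝 mr) := by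
      have h1 := hg_sum.hasSum.tendsto_sum_nat
      rw [hg_tsum] at h1
      exact h1.comp (tendsto_add_atTop_nat 2)
    have hStend : Tendsto (fun M : ℕ => ∑ i ∈ Finset.range M, μbar (i+1)) atTop
        (𝓝 (mr - 1 + μ 0)) := by
      have hlow : Tendsto (fun M : ℕ => (∑ j ∈ Finset.range (M+2), (j:ℝ) * μ j) - (1 - μ 0))
          atTop (𝓝 (mr - 1 + μ 0)) := by
        have := hpt.sub_const (1 - μ 0)
        convert this using 2
        ring
      refine tendsto_of_tendsto_of_tendsto_of_le_of_le hlow tendsto_const_nhds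
        (fun M => ?_) (fun M => hSle M)
      have h1 := hS_eq M
      have h5 : (0:ℝ) ≤ ((M+1:ℕ):ℝ) * μbar (M+1) :=
        mul_nonneg (Nat.cast_nonneg _) (hbar_nn _)
      linarith
    have hσlt : mr - 1 + μ 0 < μ 0 := by linarith
    have htendW := aux_conv (μ 0) hμ0 ΔW W _ (mr - 1 + μ 0) hΔnn hW hrenew2
      hSnn hSle hStend hσlt
    have hmr1 : mr - 1 ≠ 0 := by intro h; linarith [sub_eq_zero.1 h]
    have hval : μ 0 * ΔW 0 / (μ 0 - (mr - 1 + μ 0)) = -(1 / (α * (mr - 1))) := by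
      have h2 : (0:ℝ) < 1 - mr := by linarith
      rw [hΔW0, show μ 0 - (mr - 1 + μ 0) = 1 - mr by ring, div_eq_iff (ne_of_gt h2)]
      field_simp
      ring
    refine ⟨?_, ?_, ?_⟩
    · have hF := aux_deriv μ hμ_nonneg hμ_summable hμ_sum mr hg_sum hg_tsum
      have hψfun : ψ = fun s => α * ((∑' j : ℕ, μ j * s ^ j) - s) - 0 * s := funext hψ
      rw [hψfun]
      have hD := ((hF.sub (hasDerivWithinAt_id (1:ℝ) (Iic 1))).const_mul α).sub
        ((hasDerivWithinAt_id (1:ℝ) (Iic 1)).const_mul (0:ℝ))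
      simpa [Pi.sub_def] using hD
    · exact mul_neg_of_pos_of_neg hα (by linarith)
    · rw [← hval]
      exact htendW
end

section
/- For r > 0 define π_r : ℕ → [0,∞) recursively by π_r(0) = 1 and π_r(k+1) = (r/(k+1))·(π_r ⋆ W)(k) for k ≥ 0. Then for every y ≥ 1, lim_{r↓0} π_r(y) = 0 and lim_{r↓0} π_r(y)/r = W(y − 1)/y. -/
open Set Filter Topology
open scoped ENNReal

theorem stmt_17 (α p : ℝ) (μ : ℕ → ℝ)
    (hα : 0 < α) (hp : 0 ≤ p)
    (hμ_nonneg : ∀ j, 0 ≤ μ j) (hμ_sum : ∑' j, μ j = 1)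
    (hμ0 : 0 < μ 0) (hμ1 : μ 1 = 0)
    (μbar : ℕ → ℝ)
    (hμbar : ∀ k, μbar k = 1 - ∑ j ∈ Finset.range (k+1), μ j)
    (ΔW : ℕ → ℝ)
    (hΔW0 : ΔW 0 = 1 / (α * μ 0))
    (hΔW : ∀ k, ΔW (k+1) = (1 / μ 0) * ∑ j ∈ Finset.range (k+1), ΔW j * (μbar (k - j + 1) + p / α))
    (W : ℕ → ℝ)
    (hW : ∀ k, W k = ∑ j ∈ Finset.range (k+1), ΔW j)
    (πr : ℝ → ℕ → ℝ)
    (hπr0 : ∀ r : ℝ, πr r 0 = 1)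
    (hπr : ∀ (r : ℝ) (k : ℕ),
      πr r (k+1) = (r / (k + 1 : ℝ)) * ∑ y ∈ Finset.range (k+1), πr r (k - y) * W y) :
    ∀ y : ℕ, 1 ≤ y →
      Tendsto (fun r => πr r y) (nhdsWithin 0 (Ioi 0)) (nhds 0) ∧
      Tendsto (fun r => πr r y / r) (nhdsWithin 0 (Ioi 0)) (nhds (W (y - 1) / (y : ℝ))) := by
  -- continuity in r
  have cont : ∀ y, Continuous (fun r => πr r y) := by
    intro y
    induction y using Nat.strong_induction_on with
    | _ y ih =>
      match y with
      | 0 => simpa [hπr0] using continuous_const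
      | k+1 =>
        have : (fun r => πr r (k+1)) =
            fun r => (r / (k + 1 : ℝ)) * ∑ i ∈ Finset.range (k+1), πr r (k - i) * W i := by
          funext r; exact hπr r k
        rw [this]
        exact (continuous_id.div_const _).mul
          (continuous_finset_sum _ fun i hi =>
            ((ih (k - i) (by omega)).mul continuous_const))
  have hzero : ∀ k, πr 0 (k+1) = 0 := by
    intro k; rw [hπr]; simp
  intro y hy
  obtain ⟨k, rfl⟩ : ∃ k, y = k + 1 := ⟨y - 1, by omega⟩
  constructor
  · have := ((cont (k+1)).tendsto 0).mono_left (nhdsWithin_le_nhds (s := Ioi (0:ℝ)))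
    rwa [hzero k] at this
  · -- the limit function
    set g : ℝ → ℝ := fun r => (1 / (k + 1 : ℝ)) * ∑ i ∈ Finset.range (k+1), πr r (k - i) * W i
      with hg
    have hcg : Continuous g :=
      continuous_const.mul (continuous_finset_sum _ fun i hi =>
        ((cont (k - i)).mul continuous_const))
    have hg0 : g 0 = W ((k+1) - 1) / ((k+1 : ℕ) : ℝ) := by
      have hsum : ∑ i ∈ Finset.range (k+1), πr 0 (k - i) * W i = W k := by
        rw [Finset.sum_eq_single k]
        · simp [hπr0]
        · intro i hi hik
          have : k - i = (k - i - 1) + 1 := by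
            have : i < k := by
              have := Finset.mem_range.mp hi; omega
            omega
          rw [this, hzero, zero_mul]
        · intro h; exact absurd (Finset.self_mem_range_succ k) h
      simp only [hg, hsum]
      push_cast
      simp [div_eq_mul_inv, mul_comm]
    have heq : ∀ᶠ r in nhdsWithin (0:ℝ) (Ioi 0), πr r (k+1) / r = g r := by
      filter_upwards [self_mem_nhdsWithin] with r hr
      have hr0 : r ≠ 0 := ne_of_gt hr
      rw [hπr, hg]
      field_simp
    have := (hcg.tendsto 0).mono_left (nhdsWithin_le_nhds (s := Ioi (0:ℝ)))
    rw [hg0] at this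
    exact this.congr' (heq.mono fun r h => h.symm)
end

section
/- For every integer x ≥ 0, lim_{r↓0} r ∫_0^{s_0} (v^x/ψ(v)) · exp(−r ∫_0^v du/ψ(u)) dv = s_0^x. -/
open Set Filter Topology MeasureTheory
open scoped ENNReal

theorem stmt_18 (α p : ℝ) (μ : ℕ → ℝ) (ψ : ℝ → ℝ) (s₀ : ℝ)
    (hα : 0 < α) (hp : 0 ≤ p)
    (hμ_nonneg : ∀ j, 0 ≤ μ j) (hμ_sum : ∑' j, μ j = 1)
    (hμ0 : 0 < μ 0) (hμ1 : μ 1 = 0)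
    (hψ : ∀ s : ℝ, ψ s = α * ((∑' j, μ j * s ^ j) - s) - p * s)
    (hs₀ : s₀ = sInf {s : ℝ | 0 < s ∧ ψ s = 0})
    (hs₀_mem : s₀ ∈ Ioc (0:ℝ) 1)
    (hψ_pos : ∀ s ∈ Ico (0:ℝ) s₀, 0 < ψ s)
    (hΛ_fin : ∀ v ∈ Ico (0:ℝ) s₀, IntervalIntegrable (fun u => 1 / ψ u) MeasureTheory.volume 0 v)
    (hΛ_top : Tendsto (fun v => ∫ u in (0:ℝ)..v, 1 / ψ u) (nhdsWithin s₀ (Iio s₀)) atTop) :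
    ∀ x : ℕ,
      Tendsto (fun r : ℝ =>
          r * ∫ v in (0:ℝ)..s₀, (v ^ x / ψ v) * Real.exp (-(r * ∫ u in (0:ℝ)..v, 1 / ψ u)))
        (nhdsWithin 0 (Ioi 0)) (nhds (s₀ ^ x)) := by
  intro x
  set Λ : ℝ → ℝ := fun v => ∫ u in (0:ℝ)..v, 1 / ψ u with hΛdef
  obtain ⟨hs₀_pos, hs₀_le⟩ := hs₀_mem
  -- summability and bound on μ
  have hμ_summable : Summable μ := by
    by_contra h
    rw [tsum_eq_zero_of_not_summable h] at hμ_sum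
    norm_num at hμ_sum
  have hμ_le : ∀ j, μ j ≤ 1 := by
    intro j
    rw [← hμ_sum]
    exact Summable.le_tsum hμ_summable j fun i _ => hμ_nonneg i
  -- continuity of ψ on Ioo (-1) 1
  have hψ_cont : ∀ v ∈ Ioo (-1:ℝ) 1, ContinuousAt ψ v := by
    intro v hv
    have habs : |v| < 1 := abs_lt.2 ⟨hv.1, hv.2⟩
    set ρ : ℝ := (|v| + 1) / 2 with hρdef
    have habs0 : (0:ℝ) ≤ |v| := abs_nonneg v
    have hρ0 : (0:ℝ) ≤ ρ := by positivity
    have hρ1 : ρ < 1 := by rw [hρdef]; linarith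
    have hvρ : |v| < ρ := by rw [hρdef]; linarith
    have hF : ContinuousOn (fun s : ℝ => ∑' j, μ j * s ^ j) (Icc (-ρ) ρ) := by
      apply continuousOn_tsum (u := fun j => ρ ^ j)
      · intro i
        exact (continuous_const.mul (continuous_pow i)).continuousOn
      · exact summable_geometric_of_lt_one hρ0 hρ1
      · intro n s hs
        have hsρ : |s| ≤ ρ := abs_le.2 ⟨hs.1, hs.2⟩
        calc ‖μ n * s ^ n‖ = μ n * |s| ^ n := by
              rw [norm_mul, norm_pow, Real.norm_eq_abs, Real.norm_eq_abs,
                abs_of_nonneg (hμ_nonneg n)]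
          _ ≤ 1 * ρ ^ n :=
              mul_le_mul (hμ_le n) (pow_le_pow_left₀ (abs_nonneg s) hsρ n)
                (by positivity) one_pos.le
          _ = ρ ^ n := one_mul _
    have hFat : ContinuousAt (fun s : ℝ => ∑' j, μ j * s ^ j) v := by
      obtain ⟨h1, h2⟩ := abs_lt.1 hvρ
      exact hF.continuousAt (Icc_mem_nhds h1 h2)
    have hψeq : ψ = fun s => α * ((∑' j, μ j * s ^ j) - s) - p * s := funext hψ
    rw [hψeq]
    exact (continuousAt_const.mul (hFat.sub continuousAt_id)).sub
      (continuousAt_const.mul continuousAt_id)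
  have hsub : Ico (0:ℝ) s₀ ⊆ Ioo (-1:ℝ) 1 := fun u hu =>
    ⟨by linarith [hu.1], lt_of_lt_of_le hu.2 hs₀_le⟩
  -- the open set where 1/ψ is continuous
  have hU_open : IsOpen {u : ℝ | u ∈ Ioo (-1:ℝ) 1 ∧ 0 < ψ u} := by
    rw [isOpen_iff_mem_nhds]
    rintro u ⟨hu1, hu2⟩
    have h1 : Ioo (-1:ℝ) 1 ∈ 𝓝 u := isOpen_Ioo.mem_nhds hu1
    have h2 : ψ ⁻¹' Ioi 0 ∈ 𝓝 u := hψ_cont u hu1 (Ioi_mem_nhds hu2)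
    filter_upwards [h1, h2] with y hy1 hy2
    exact ⟨hy1, hy2⟩
  have hUsub : Ico (0:ℝ) s₀ ⊆ {u : ℝ | u ∈ Ioo (-1:ℝ) 1 ∧ 0 < ψ u} := fun u hu =>
    ⟨hsub hu, hψ_pos u hu⟩
  have hinv_cont : ∀ u ∈ {u : ℝ | u ∈ Ioo (-1:ℝ) 1 ∧ 0 < ψ u},
      ContinuousAt (fun u => 1 / ψ u) u := fun u hu =>
    continuousAt_const.div (hψ_cont u hu.1) (ne_of_gt hu.2)
  have hΛ_deriv : ∀ v ∈ Ico (0:ℝ) s₀, HasDerivAt Λ (1 / ψ v) v := fun v hv =>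
    intervalIntegral.integral_hasDerivAt_right (hΛ_fin v hv)
      (ContinuousAt.stronglyMeasurableAtFilter hU_open hinv_cont v (hUsub hv))
      (hinv_cont v (hUsub hv))
  have hΛ0 : Λ 0 = 0 := intervalIntegral.integral_same
  -- continuity of the integrand pieces
  have hexp_cont : ∀ r : ℝ, ∀ v ∈ Ico (0:ℝ) s₀,
      ContinuousAt (fun v => Real.exp (-(r * Λ v))) v := fun r v hv =>
    Real.continuous_exp.continuousAt.comp
      ((continuousAt_const.mul (hΛ_deriv v hv).continuousAt).neg)
  have hh_cont : ∀ r : ℝ, ∀ v ∈ Ico (0:ℝ) s₀,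
      ContinuousAt (fun v => 1 / ψ v * Real.exp (-(r * Λ v))) v := fun r v hv =>
    (hinv_cont v (hUsub hv)).mul (hexp_cont r v hv)
  have hh_nonneg : ∀ r : ℝ, ∀ v ∈ Ico (0:ℝ) s₀,
      0 ≤ 1 / ψ v * Real.exp (-(r * Λ v)) := fun r v hv =>
    mul_nonneg (one_div_nonneg.2 (hψ_pos v hv).le) (Real.exp_pos _).le
  -- the key improper integral computation
  have key : ∀ r : ℝ, 0 < r → ∀ c ∈ Ico (0:ℝ) s₀,
      IntegrableOn (fun v => 1 / ψ v * Real.exp (-(r * Λ v))) (Ioc c s₀) ∧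
      ∫ v in Ioc c s₀, 1 / ψ v * Real.exp (-(r * Λ v)) = Real.exp (-(r * Λ c)) / r := by
    intro r hr c hc
    have hr0 : r ≠ 0 := ne_of_gt hr
    have hG : ∀ v ∈ Ico (0:ℝ) s₀,
        HasDerivAt (fun v => -Real.exp (-(r * Λ v)) / r)
          (1 / ψ v * Real.exp (-(r * Λ v))) v := by
      intro v hv
      have h1 : HasDerivAt (fun v => -(r * Λ v)) (-(r * (1 / ψ v))) v :=
        ((hΛ_deriv v hv).const_mul r).neg
      have h3 := (h1.exp.neg).div_const r
      refine h3.congr_deriv (Eq.symm ?_)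
      rw [eq_div_iff hr0]
      ring
    have hFTC : ∀ c' ∈ Ico (0:ℝ) s₀, c ≤ c' →
        ∫ v in Ioc c c', 1 / ψ v * Real.exp (-(r * Λ v)) =
          -Real.exp (-(r * Λ c')) / r - -Real.exp (-(r * Λ c)) / r := by
      intro c' hc' hcc'
      have hsubI : uIcc c c' ⊆ Ico (0:ℝ) s₀ := by
        rw [uIcc_of_le hcc']
        exact fun y hy => ⟨le_trans hc.1 hy.1, lt_of_le_of_lt hy.2 hc'.2⟩
      rw [← intervalIntegral.integral_of_le hcc']
      exact intervalIntegral.integral_eq_sub_of_hasDerivAt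
        (fun y hy => hG y (hsubI hy))
        (ContinuousOn.intervalIntegrable
          (fun y hy => (hh_cont r y (hsubI hy)).continuousWithinAt))
    -- approximating sequence
    set b : ℕ → ℝ := fun n => s₀ - (s₀ - c) / (n + 1) with hbdef
    have hscpos : 0 < s₀ - c := sub_pos.2 hc.2
    have hb_lt : ∀ n, b n < s₀ := by
      intro n
      have : (0:ℝ) < (s₀ - c) / (n + 1) := by positivity
      simp only [hbdef]
      linarith
    have hb_ge : ∀ n, c ≤ b n := by
      intro n
      have h1 : (s₀ - c) / (n + 1) ≤ s₀ - c := by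
        apply div_le_self hscpos.le
        have : (0:ℝ) ≤ (n:ℝ) := Nat.cast_nonneg n
        linarith
      simp only [hbdef]
      linarith
    have hb_mem : ∀ n, b n ∈ Ico (0:ℝ) s₀ := fun n =>
      ⟨le_trans hc.1 (hb_ge n), hb_lt n⟩
    have hb_tendsto : Tendsto b atTop (𝓝 s₀) := by
      have h1 : Tendsto (fun n : ℕ => s₀ - (s₀ - c) * (1 / ((n:ℝ) + 1))) atTop
          (𝓝 (s₀ - (s₀ - c) * 0)) :=
        tendsto_const_nhds.sub (tendsto_const_nhds.mul tendsto_one_div_add_atTop_nhds_zero_nat)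
      have h2 : b = fun n : ℕ => s₀ - (s₀ - c) * (1 / ((n:ℝ) + 1)) := by
        funext n; simp only [hbdef]; ring
      rw [h2]
      simpa using h1
    have hfi : ∀ n, IntegrableOn (fun v => 1 / ψ v * Real.exp (-(r * Λ v))) (Ioc c (b n)) := by
      intro n
      apply IntegrableOn.mono_set _ Ioc_subset_Icc_self
      apply ContinuousOn.integrableOn_Icc
      intro y hy
      exact (hh_cont r y ⟨le_trans hc.1 hy.1, lt_of_le_of_lt hy.2 (hb_lt n)⟩).continuousWithinAt
    have hmemIoc : ∀ n, ∀ y ∈ Ioc c (b n), y ∈ Ico (0:ℝ) s₀ := fun n y hy =>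
      ⟨le_trans hc.1 hy.1.le, lt_of_le_of_lt hy.2 (hb_lt n)⟩
    have hnorm : ∀ n, (∫ v in Ioc c (b n), ‖1 / ψ v * Real.exp (-(r * Λ v))‖) ≤
        Real.exp (-(r * Λ c)) / r := by
      intro n
      have heq : (∫ v in Ioc c (b n), ‖1 / ψ v * Real.exp (-(r * Λ v))‖) =
          ∫ v in Ioc c (b n), 1 / ψ v * Real.exp (-(r * Λ v)) := by
        apply setIntegral_congr_fun measurableSet_Ioc
        intro y hy
        exact Real.norm_of_nonneg (hh_nonneg r y (hmemIoc n y hy))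
      rw [heq, hFTC (b n) (hb_mem n) (hb_ge n)]
      have h1 : (0:ℝ) ≤ Real.exp (-(r * Λ (b n))) := (Real.exp_pos _).le
      have h2 : -Real.exp (-(r * Λ (b n))) / r - -Real.exp (-(r * Λ c)) / r =
          (Real.exp (-(r * Λ c)) - Real.exp (-(r * Λ (b n)))) / r := by ring
      rw [h2]
      gcongr
      linarith
    have hInt : IntegrableOn (fun v => 1 / ψ v * Real.exp (-(r * Λ v))) (Ioc c s₀) :=
      integrableOn_Ioc_of_intervalIntegral_norm_bounded_right hfi hb_tendsto
        (Eventually.of_forall hnorm)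
    refine ⟨hInt, ?_⟩
    have hcov : AECover (volume.restrict (Ioc c s₀)) atTop fun n => Ioc c (b n) :=
      aecover_Ioc_of_Ioc tendsto_const_nhds hb_tendsto
    have h1 := hcov.integral_tendsto_of_countably_generated hInt
    have h2 : (fun n => ∫ v in Ioc c (b n),
          (1 / ψ v * Real.exp (-(r * Λ v))) ∂(volume.restrict (Ioc c s₀))) =
        fun n => -Real.exp (-(r * Λ (b n))) / r - -Real.exp (-(r * Λ c)) / r := by
      funext n
      rw [Measure.restrict_restrict measurableSet_Ioc,
        inter_eq_self_of_subset_left (Ioc_subset_Ioc_right (hb_lt n).le)]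
      exact hFTC (b n) (hb_mem n) (hb_ge n)
    rw [h2] at h1
    have h3 : Tendsto (fun n => -Real.exp (-(r * Λ (b n))) / r - -Real.exp (-(r * Λ c)) / r)
        atTop (𝓝 (Real.exp (-(r * Λ c)) / r)) := by
      have hb_in : Tendsto b atTop (𝓝[<] s₀) :=
        tendsto_nhdsWithin_of_tendsto_nhds_of_eventually_within _ hb_tendsto
          (Eventually.of_forall hb_lt)
      have hrΛ : Tendsto (fun v => -(r * Λ v)) (𝓝[<] s₀) atBot :=
        tendsto_neg_atTop_atBot.comp (hΛ_top.const_mul_atTop hr)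
      have hexp : Tendsto (fun n => Real.exp (-(r * Λ (b n)))) atTop (𝓝 0) :=
        Real.tendsto_exp_atBot.comp (hrΛ.comp hb_in)
      have h4 := ((hexp.neg).div_const r).sub
        (tendsto_const_nhds (x := -Real.exp (-(r * Λ c)) / r))
      simpa [neg_div, neg_neg] using h4
    exact tendsto_nhds_unique h1 h3
  -- the two-sided bound on the quantity of interest
  have hbound : ∀ r : ℝ, 0 < r → ∀ c ∈ Ico (0:ℝ) s₀,
      c ^ x * Real.exp (-(r * Λ c)) ≤
        (r * ∫ v in (0:ℝ)..s₀, (v ^ x / ψ v) * Real.exp (-(r * Λ v))) ∧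
      (r * ∫ v in (0:ℝ)..s₀, (v ^ x / ψ v) * Real.exp (-(r * Λ v))) ≤ s₀ ^ x := by
    intro r hr c hc
    obtain ⟨hInt0, hval0⟩ := key r hr 0 ⟨le_refl 0, hs₀_pos⟩
    obtain ⟨hIntc, hvalc⟩ := key r hr c hc
    -- rewrite the interval integral as a set integral over Ioo with the product form
    have hrw : (∫ v in (0:ℝ)..s₀, (v ^ x / ψ v) * Real.exp (-(r * Λ v))) =
        ∫ v in Ioo (0:ℝ) s₀, v ^ x * (1 / ψ v * Real.exp (-(r * Λ v))) := by
      rw [intervalIntegral.integral_of_le hs₀_pos.le, integral_Ioc_eq_integral_Ioo]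
      apply setIntegral_congr_fun measurableSet_Ioo
      intro y _
      ring
    -- integrability of the main integrand on Ioo 0 s₀
    have hfx_int : IntegrableOn (fun v => v ^ x * (1 / ψ v * Real.exp (-(r * Λ v))))
        (Ioc (0:ℝ) s₀) := by
      apply Integrable.mono (hInt0.const_mul (s₀ ^ x))
      · rw [← Measure.restrict_congr_set Ioo_ae_eq_Ioc]
        apply ContinuousOn.aestronglyMeasurable _ measurableSet_Ioo
        intro y hy
        have hy' : y ∈ Ico (0:ℝ) s₀ := ⟨hy.1.le, hy.2⟩
        exact ((continuous_pow x).continuousAt.mul (hh_cont r y hy')).continuousWithinAt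
      · filter_upwards [ae_restrict_mem measurableSet_Ioc] with y hy
        have h1 : |y| ≤ s₀ := by
          rw [abs_of_pos hy.1]; exact hy.2
        have e1 : ‖y ^ x * (1 / ψ y * Real.exp (-(r * Λ y)))‖ =
            |y| ^ x * ‖1 / ψ y * Real.exp (-(r * Λ y))‖ := by
          rw [norm_mul, Real.norm_eq_abs (y ^ x), abs_pow]
        have e2 : ‖s₀ ^ x * (1 / ψ y * Real.exp (-(r * Λ y)))‖ =
            s₀ ^ x * ‖1 / ψ y * Real.exp (-(r * Λ y))‖ := by
          rw [norm_mul, Real.norm_eq_abs (s₀ ^ x), abs_of_nonneg (pow_nonneg hs₀_pos.le x)]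
        rw [e1, e2]
        exact mul_le_mul_of_nonneg_right (pow_le_pow_left₀ (abs_nonneg y) h1 x)
          (norm_nonneg _)
    have hfx_int_Ioo : IntegrableOn (fun v => v ^ x * (1 / ψ v * Real.exp (-(r * Λ v))))
        (Ioo (0:ℝ) s₀) := hfx_int.mono_set Ioo_subset_Ioc_self
    constructor
    · -- lower bound
      rw [hrw]
      have hstep1 : (∫ v in Ioo c s₀, v ^ x * (1 / ψ v * Real.exp (-(r * Λ v)))) ≤
          ∫ v in Ioo (0:ℝ) s₀, v ^ x * (1 / ψ v * Real.exp (-(r * Λ v))) := by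
        apply setIntegral_mono_set hfx_int_Ioo
        · filter_upwards [ae_restrict_mem measurableSet_Ioo] with y hy
          exact mul_nonneg (pow_nonneg hy.1.le x) (hh_nonneg r y ⟨hy.1.le, hy.2⟩)
        · exact HasSubset.Subset.eventuallyLE (Ioo_subset_Ioo_left hc.1)
      have hstep2 : (∫ v in Ioo c s₀, c ^ x * (1 / ψ v * Real.exp (-(r * Λ v)))) ≤
          ∫ v in Ioo c s₀, v ^ x * (1 / ψ v * Real.exp (-(r * Λ v))) := by
        apply setIntegral_mono_on
        · exact IntegrableOn.mono_set (hIntc.const_mul (c ^ x)) Ioo_subset_Ioc_self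
        · exact hfx_int_Ioo.mono_set (Ioo_subset_Ioo_left hc.1)
        · exact measurableSet_Ioo
        · intro y hy
          have hy' : y ∈ Ico (0:ℝ) s₀ := ⟨le_trans hc.1 hy.1.le, hy.2⟩
          exact mul_le_mul_of_nonneg_right
            (pow_le_pow_left₀ hc.1 hy.1.le x) (hh_nonneg r y hy')
      have hstep3 : (∫ v in Ioo c s₀, c ^ x * (1 / ψ v * Real.exp (-(r * Λ v)))) =
          c ^ x * (Real.exp (-(r * Λ c)) / r) := by
        rw [integral_const_mul, ← integral_Ioc_eq_integral_Ioo, hvalc]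
      have h5 : c ^ x * (Real.exp (-(r * Λ c)) / r) ≤
          ∫ v in Ioo (0:ℝ) s₀, v ^ x * (1 / ψ v * Real.exp (-(r * Λ v))) := by
        rw [← hstep3]; exact le_trans hstep2 hstep1
      calc c ^ x * Real.exp (-(r * Λ c))
          = r * (c ^ x * (Real.exp (-(r * Λ c)) / r)) := by
            field_simp
        _ ≤ r * ∫ v in Ioo (0:ℝ) s₀, v ^ x * (1 / ψ v * Real.exp (-(r * Λ v))) := by
            exact mul_le_mul_of_nonneg_left h5 hr.le
    · -- upper bound
      rw [hrw]
      have hstep1 : (∫ v in Ioo (0:ℝ) s₀, v ^ x * (1 / ψ v * Real.exp (-(r * Λ v)))) ≤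
          ∫ v in Ioo (0:ℝ) s₀, s₀ ^ x * (1 / ψ v * Real.exp (-(r * Λ v))) := by
        apply setIntegral_mono_on hfx_int_Ioo
          (IntegrableOn.mono_set (hInt0.const_mul (s₀ ^ x)) Ioo_subset_Ioc_self) measurableSet_Ioo
        intro y hy
        exact mul_le_mul_of_nonneg_right (pow_le_pow_left₀ hy.1.le hy.2.le x)
          (hh_nonneg r y ⟨hy.1.le, hy.2⟩)
      have hstep2 : (∫ v in Ioo (0:ℝ) s₀, s₀ ^ x * (1 / ψ v * Real.exp (-(r * Λ v)))) =
          s₀ ^ x * (1 / r) := by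
        rw [integral_const_mul, ← integral_Ioc_eq_integral_Ioo, hval0, hΛ0]
        norm_num
      calc r * ∫ v in Ioo (0:ℝ) s₀, v ^ x * (1 / ψ v * Real.exp (-(r * Λ v)))
          ≤ r * (s₀ ^ x * (1 / r)) := by
            rw [← hstep2]
            exact mul_le_mul_of_nonneg_left hstep1 hr.le
        _ = s₀ ^ x := by field_simp
  -- conclude by squeezing
  rw [tendsto_order]
  constructor
  · intro a ha
    have hpow : Tendsto (fun c : ℝ => c ^ x) (𝓝[<] s₀) (𝓝 (s₀ ^ x)) :=
      ((continuous_pow x).tendsto s₀).mono_left nhdsWithin_le_nhds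
    have h1 : ∀ᶠ c in 𝓝[<] s₀, a < c ^ x := hpow.eventually (eventually_gt_nhds ha)
    have h2 : Ioo (0:ℝ) s₀ ∈ 𝓝[<] s₀ :=
      Ioo_mem_nhdsLT_of_mem ⟨hs₀_pos, le_refl s₀⟩
    obtain ⟨c, hc1, hc2⟩ := (h1.and h2).exists
    have hc_mem : c ∈ Ico (0:ℝ) s₀ := ⟨hc2.1.le, hc2.2⟩
    have h3 : Tendsto (fun r : ℝ => c ^ x * Real.exp (-(r * Λ c))) (𝓝[>] 0) (𝓝 (c ^ x)) := by
      have h4 : Continuous fun r : ℝ => c ^ x * Real.exp (-(r * Λ c)) :=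
        continuous_const.mul (Real.continuous_exp.comp ((continuous_id.mul continuous_const).neg))
      have h5 := (h4.tendsto 0).mono_left (nhdsWithin_le_nhds (s := Ioi (0:ℝ)))
      simpa using h5
    filter_upwards [h3.eventually (eventually_gt_nhds hc1), self_mem_nhdsWithin]
      with r hr1 hr2
    exact lt_of_lt_of_le hr1 (hbound r hr2 c hc_mem).1
  · intro b hb
    filter_upwards [self_mem_nhdsWithin] with r hr
    exact lt_of_le_of_lt (hbound r hr 0 ⟨le_refl 0, hs₀_pos⟩).2 hb
end

section
/- Suppose in addition that m := Σ_{j≥2} j μ(j) satisfies 0 < m ≤ 1 + p/α, and that β = α m, ν(j) = (j+1)μ(j+1)/m for j ≥ 1, and q = p − α(m − 1). Then φ(s) = −ψ'(s) for all s ∈ [0,1), and consequently π(x) = ψ(0) W(x) for all x ≥ 0 and 𝓗^{[y}(x) = W(y − x − 1)/(x + 1) for all x, y ≥ 0, where W(z) is understood as 0 for integers z ≤ −1. -/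
open Set Filter Topology Finset

namespace Stmt19Aux

noncomputable def cv (f g : ℕ → ℝ) (k : ℕ) : ℝ := ∑ y ∈ Finset.range (k+1), f (k-y) * g y
noncomputable def der (f : ℕ → ℝ) (k : ℕ) : ℝ := (k+1 : ℝ) * f (k+1)
noncomputable def psc (α p : ℝ) (μ : ℕ → ℝ) (k : ℕ) : ℝ := if k = 1 then -(α + p) else α * μ k
noncomputable def dlt (k : ℕ) : ℝ := if k = 0 then 1 else 0

lemma cv_eq_coeff (f g : ℕ → ℝ) (k : ℕ) :
    cv f g k = PowerSeries.coeff k (PowerSeries.mk f * PowerSeries.mk g) := by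
  rw [PowerSeries.coeff_mul, Finset.Nat.sum_antidiagonal_eq_sum_range_succ_mk]
  unfold cv
  rw [← Finset.sum_range_reflect]
  apply Finset.sum_congr rfl
  intro y hy
  simp only [Finset.mem_range] at hy
  have h1 : k + 1 - 1 - y = k - y := by omega
  have h2 : k - (k - y) = y := by omega
  rw [h1, h2]
  simp

lemma mk_cv (f g : ℕ → ℝ) :
    PowerSeries.mk (cv f g) = PowerSeries.mk f * PowerSeries.mk g := by
  ext k
  rw [PowerSeries.coeff_mk, cv_eq_coeff]

lemma cv_comm (f g : ℕ → ℝ) (k : ℕ) : cv f g k = cv g f k := by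
  rw [cv_eq_coeff, cv_eq_coeff, mul_comm]

lemma cv_assoc (f g h : ℕ → ℝ) (k : ℕ) : cv (cv f g) h k = cv f (cv g h) k := by
  rw [cv_eq_coeff, cv_eq_coeff, mk_cv, mk_cv, mul_assoc]

lemma mk_der (f : ℕ → ℝ) :
    PowerSeries.mk (der f) = PowerSeries.derivativeFun (PowerSeries.mk f) := by
  ext k
  show _ = PowerSeries.coeff k (PowerSeries.derivative ℝ (PowerSeries.mk f))
  rw [PowerSeries.coeff_mk, PowerSeries.coeff_derivativeFun, PowerSeries.coeff_mk, der]
  ring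

lemma prod_rule (f g : ℕ → ℝ) (n : ℕ) :
    (n+1 : ℝ) * cv f g (n+1) = cv (der f) g n + cv f (der g) n := by
  have h : (n+1 : ℝ) * cv f g (n+1)
      = PowerSeries.coeff n (PowerSeries.derivativeFun (PowerSeries.mk f * PowerSeries.mk g)) := by
    show _ = PowerSeries.coeff n (PowerSeries.derivative ℝ (PowerSeries.mk f * PowerSeries.mk g))
    rw [PowerSeries.coeff_derivativeFun, cv_eq_coeff]
    ring
  rw [h, PowerSeries.derivativeFun_mul]
  rw [cv_eq_coeff, cv_eq_coeff, mk_der, mk_der]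
  rw [smul_eq_mul, smul_eq_mul, map_add]
  ring

lemma cv_dlt (f : ℕ → ℝ) (k : ℕ) : cv f dlt k = f k := by
  unfold cv dlt
  rw [Finset.sum_eq_single 0]
  · simp
  · intro y _ hy; simp [hy]
  · intro h; simp at h

lemma cv_neg (f g : ℕ → ℝ) (k : ℕ) : cv f (fun y => -(g y)) k = -(cv f g k) := by
  unfold cv; simp [mul_neg]

lemma cv_congr_left {f f' : ℕ → ℝ} (g : ℕ → ℝ) (h : ∀ n, f n = f' n) (k : ℕ) :
    cv f g k = cv f' g k := by
  unfold cv; exact Finset.sum_congr rfl fun y _ => by rw [h]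

lemma cv_congr_right (f : ℕ → ℝ) {g g' : ℕ → ℝ} (h : ∀ n, g n = g' n) (k : ℕ) :
    cv f g k = cv f g' k := by
  unfold cv; exact Finset.sum_congr rfl fun y _ => by rw [h]

end Stmt19Aux

open Stmt19Aux

theorem stmt_19 (α p : ℝ) (μ : ℕ → ℝ) (ψ : ℝ → ℝ) (s₀ : ℝ)
    (hα : 0 < α) (hp : 0 ≤ p)
    (hμ_nonneg : ∀ j, 0 ≤ μ j) (hμ_sum : ∑' j, μ j = 1)
    (hμ0 : 0 < μ 0) (hμ1 : μ 1 = 0)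
    (hψ : ∀ s : ℝ, ψ s = α * ((∑' j, μ j * s ^ j) - s) - p * s)
    (hs₀ : s₀ = sInf {s : ℝ | 0 < s ∧ ψ s = 0})
    (hs₀_mem : s₀ ∈ Ioc (0:ℝ) 1)
    (hψ_pos : ∀ s ∈ Ico (0:ℝ) s₀, 0 < ψ s)
    (β q : ℝ) (ν : ℕ → ℝ) (φ : ℝ → ℝ)
    (hβ : 0 ≤ β) (hq : 0 ≤ q)
    (hν_nonneg : ∀ j, 0 ≤ ν j) (hν0 : ν 0 = 0) (hν_sum : ∑' j, ν j = 1)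
    (hφ : ∀ s : ℝ, φ s = β * (1 - ∑' j, ν j * s ^ j) + q)
    (νbar : ℕ → ℝ)
    (hνbar : ∀ k, νbar k = 1 - ∑ j ∈ Finset.range (k+1), ν j)
    (μbar : ℕ → ℝ)
    (hμbar : ∀ k, μbar k = 1 - ∑ j ∈ Finset.range (k+1), μ j)
    (ΔW : ℕ → ℝ)
    (hΔW0 : ΔW 0 = 1 / (α * μ 0))
    (hΔW : ∀ k, ΔW (k+1) = (1 / μ 0) * ∑ j ∈ Finset.range (k+1), ΔW j * (μbar (k - j + 1) + p / α))
    (W : ℕ → ℝ)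
    (hW : ∀ k, W k = ∑ j ∈ Finset.range (k+1), ΔW j)
    (κ : ℕ → ℝ)
    (hκ : ∀ k, κ k = β * (∑ y ∈ Finset.range (k+1), ΔW (k - y) * νbar y) + q * W k)
    (π : ℕ → ℝ)
    (hπ0 : π 0 = 1)
    (hπ : ∀ k, π (k+1) = (∑ y ∈ Finset.range (k+1), π (k - y) * κ y) / (k + 1 : ℝ))
    (ϖ : ℕ → ℝ)
    (hϖ0 : ϖ 0 = 1)
    (hϖ : ∀ k, ϖ (k+1) = -(∑ y ∈ Finset.range (k+1), ϖ (k - y) * κ y) / (k + 1 : ℝ))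
    (H : ℕ → ℕ → ℝ)
    (hH : ∀ x y : ℕ, H x y = ∑ l ∈ Finset.range (y - x),
      π (y - x - 1 - l) * (∑ m ∈ Finset.range (l+1), W (l - m) * ϖ m) / (l + x + 1 : ℝ))
    (m : ℝ) (hm : m = ∑' j : ℕ, (j : ℝ) * μ j)
    (hm_pos : 0 < m) (hm_le : m ≤ 1 + p / α)
    (hβm : β = α * m)
    (hνm : ∀ j : ℕ, 1 ≤ j → ν j = (j + 1 : ℝ) * μ (j + 1) / m)
    (hqm : q = p - α * (m - 1)) :
    (∀ s ∈ Ico (0:ℝ) 1, φ s = -deriv ψ s) ∧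
      (∀ x : ℕ, π x = ψ 0 * W x) ∧
      ∀ (x y : ℕ), H x y = (if x < y then W (y - x - 1) else 0) / (x + 1 : ℝ) := by
  have hα' : α ≠ 0 := ne_of_gt hα
  have hμ0' : μ 0 ≠ 0 := ne_of_gt hμ0
  have hm' : m ≠ 0 := ne_of_gt hm_pos
  have hc : α * μ 0 ≠ 0 := mul_ne_zero hα' hμ0'
  -- rescaled recursion
  have hΔW' : ∀ k, (α * μ 0) * ΔW (k+1)
      = ∑ j ∈ Finset.range (k+1), ΔW j * (α * μbar (k - j + 1) + p) := by
    intro k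
    rw [hΔW k, Finset.mul_sum, Finset.mul_sum]
    apply Finset.sum_congr rfl
    intro j hj
    field_simp
  have hμbar_succ : ∀ t, μbar (t+1) = μbar t - μ (t+1) := by
    intro t
    rw [hμbar, hμbar, Finset.sum_range_succ]
    ring
  have hμbar1 : μbar 1 = 1 - μ 0 := by
    rw [hμbar]
    simp [Finset.sum_range_succ, hμ1]
  -- L1
  have hL1 : ∀ k, cv ΔW (psc α p μ) k
      = (if k = 0 then (1:ℝ) else 0) - (if k = 1 then (1:ℝ) else 0) := by
    intro k
    match k with
    | 0 =>
      have h0 : cv ΔW (psc α p μ) 0 = ΔW 0 * psc α p μ 0 := by simp [cv]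
      rw [h0, hΔW0]
      unfold psc
      norm_num
      field_simp
    | 1 =>
      have h1 : ΔW 1 = (1 / μ 0) * (ΔW 0 * (μbar 1 + p / α)) := by
        rw [hΔW 0, Finset.sum_range_one]
      have h0 : cv ΔW (psc α p μ) 1 = ΔW 1 * psc α p μ 0 + ΔW 0 * psc α p μ 1 := by
        simp [cv, Finset.sum_range_succ]
      rw [h0, h1, hΔW0, hμbar1]
      unfold psc
      norm_num
      field_simp
      ring
    | (n+2) =>
      have e1 : ∀ y, psc α p μ (y+2) = α * μ (y+2) := by
        intro y; unfold psc; rw [if_neg (by omega)]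
      have e2 : psc α p μ 1 = -(α+p) := by unfold psc; simp
      have e3 : psc α p μ 0 = α * μ 0 := by unfold psc; simp
      have key1 : cv ΔW (psc α p μ) (n+2)
          = (∑ y ∈ Finset.range (n+1), ΔW (n-y) * (α * μ (y+2)))
            + ΔW (n+1) * (-(α+p)) + ΔW (n+2) * (α * μ 0) := by
        unfold cv
        rw [Finset.sum_range_succ', Finset.sum_range_succ']
        have hcg : ∀ y ∈ Finset.range (n+1),
            ΔW (n+2-(y+1+1)) * psc α p μ (y+1+1) = ΔW (n-y) * (α * μ (y+2)) := by
          intro y hy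
          simp only [Finset.mem_range] at hy
          rw [show n+2-(y+1+1) = n-y by omega, show y+1+1 = y+2 from rfl, e1]
        rw [Finset.sum_congr rfl hcg]
        rw [show n+2-(0+1) = n+1 by omega, show (0:ℕ)+1 = 1 from rfl, e2,
          show n+2-0 = n+2 by omega, e3]
      have key2 : (∑ y ∈ Finset.range (n+1), ΔW (n-y) * (α * μ (y+2)))
          = ∑ j ∈ Finset.range (n+1), ΔW j * (α * μ (n+2-j)) := by
        rw [← Finset.sum_range_reflect (fun j => ΔW j * (α * μ (n+2-j))) (n+1)]
        apply Finset.sum_congr rfl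
        intro y hy
        simp only [Finset.mem_range] at hy
        rw [show n+1-1-y = n-y by omega, show n+2-(n-y) = y+2 by omega]
      have key3 : (α * μ 0) * ΔW (n+2)
          = (∑ j ∈ Finset.range (n+1), ΔW j * (α * μbar (n+1-j+1) + p))
            + ΔW (n+1) * (α*(1-μ 0)+p) := by
        have h := hΔW' (n+1)
        rw [Finset.sum_range_succ, show (n+1) - (n+1) + 1 = 1 by omega, hμbar1] at h
        rw [show n+2 = n+1+1 from rfl, h]
      have key4 : (∑ j ∈ Finset.range (n+1), ΔW j * (α * μ (n+2-j)))
            + (∑ j ∈ Finset.range (n+1), ΔW j * (α * μbar (n+1-j+1) + p))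
          = ∑ j ∈ Finset.range (n+1), ΔW j * (α * μbar (n-j+1) + p) := by
        rw [← Finset.sum_add_distrib]
        apply Finset.sum_congr rfl
        intro j hj
        simp only [Finset.mem_range] at hj
        rw [show n+1-j+1 = (n-j+1)+1 by omega, show n+2-j = (n-j+1)+1 by omega,
          hμbar_succ (n-j+1)]
        ring
      have key5 : (α * μ 0) * ΔW (n+1)
          = ∑ j ∈ Finset.range (n+1), ΔW j * (α * μbar (n-j+1) + p) := hΔW' n
      rw [key1, key2, if_neg (by omega), if_neg (by omega), sub_self]
      linarith [key3, key4, key5]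
  -- L2
  have hone : ∀ (f : ℕ → ℝ) (k : ℕ), cv (fun _ => (1:ℝ)) f k = ∑ j ∈ Finset.range (k+1), f j := by
    intro f k; unfold cv; simp
  have hWrev : ∀ k, ∑ y ∈ Finset.range (k+1), ΔW (k-y) = W k := by
    intro k
    rw [hW, ← Finset.sum_range_reflect (fun j => ΔW j) (k+1)]
    apply Finset.sum_congr rfl
    intro y hy
    simp only [Finset.mem_range] at hy
    congr 1
  have hL2 : ∀ k, cv W (psc α p μ) k = dlt k := by
    intro k
    have h1 : cv W (psc α p μ) k = cv (cv (fun _ => (1:ℝ)) ΔW) (psc α p μ) k :=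
      cv_congr_left _ (fun n => by rw [hone, ← hW]) k
    rw [h1, cv_assoc]
    have h2 : cv (fun _ => (1:ℝ)) (cv ΔW (psc α p μ)) k
        = ∑ y ∈ Finset.range (k+1),
            ((if y = 0 then (1:ℝ) else 0) - (if y = 1 then (1:ℝ) else 0)) := by
      rw [hone]
      exact Finset.sum_congr rfl fun y _ => hL1 y
    rw [h2, Finset.sum_sub_distrib, Finset.sum_ite_eq' (Finset.range (k+1)) 0 (fun _ => (1:ℝ)),
      Finset.sum_ite_eq' (Finset.range (k+1)) 1 (fun _ => (1:ℝ))]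
    unfold dlt
    rcases k with _ | k
    · norm_num
    · rw [if_pos (by simp), if_pos (by simp), if_neg (by omega)]
      norm_num
  -- E and the κ identity
  set E : ℕ → ℝ := fun j => ((j:ℝ)+1) * μ (j+1) with hEdef
  have hνe : ∀ j, m * ν j = E j := by
    intro j
    match j with
    | 0 => simp [hν0, hEdef, hμ1]
    | (j+1) =>
      rw [hνm (j+1) (by omega), hEdef]
      push_cast
      field_simp
  have hβν : ∀ y, β * νbar y = α * m - α * ∑ j ∈ Finset.range (y+1), E j := by
    intro y
    rw [hνbar y, hβm]
    have h : ∑ j ∈ Finset.range (y+1), E j = m * ∑ j ∈ Finset.range (y+1), ν j := by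
      rw [Finset.mul_sum]; exact Finset.sum_congr rfl fun j _ => (hνe j).symm
    rw [h]; ring
  have hκ' : ∀ k, κ k = (α + p) * W k - α * cv W E k := by
    intro k
    rw [hκ k]
    have h2 : β * (∑ y ∈ Finset.range (k+1), ΔW (k-y) * νbar y)
        = (α*m) * (∑ y ∈ Finset.range (k+1), ΔW (k-y))
          - α * (∑ y ∈ Finset.range (k+1), ΔW (k-y) * cv (fun _ => (1:ℝ)) E y) := by
      rw [Finset.mul_sum, Finset.mul_sum, Finset.mul_sum, ← Finset.sum_sub_distrib]
      apply Finset.sum_congr rfl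
      intro y _
      have hby := hβν y
      rw [hone]
      calc β * (ΔW (k-y) * νbar y) = ΔW (k-y) * (β * νbar y) := by ring
        _ = _ := by rw [hby]; ring
    have h3 : (∑ y ∈ Finset.range (k+1), ΔW (k-y) * cv (fun _ => (1:ℝ)) E y) = cv W E k := by
      show cv ΔW (cv (fun _ => (1:ℝ)) E) k = cv W E k
      rw [← cv_assoc]
      exact cv_congr_left _ (fun n => by rw [cv_comm, hone, ← hW]) k
    rw [h2, h3, hWrev k, hqm]
    ring
  -- κ = cv (der W) psc
  have hκD : ∀ k, κ k = cv W (fun y => -(der (psc α p μ) y)) k := by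
    intro k
    rw [hκ' k]
    unfold cv
    have hterm : ∀ y ∈ Finset.range (k+1), W (k-y) * (-(der (psc α p μ) y))
        = (if y = 0 then (α+p) * W (k-y) else 0) - α * (W (k-y) * E y) := by
      intro y _
      match y with
      | 0 =>
        simp only [if_pos rfl]
        unfold der psc
        rw [hEdef]
        norm_num [hμ1]
        ring
      | (y+1) =>
        rw [if_neg (by omega)]
        unfold der psc
        rw [if_neg (by omega), hEdef]
        push_cast
        ring
    rw [Finset.sum_congr rfl hterm, Finset.sum_sub_distrib, ← Finset.mul_sum]
    rw [Finset.sum_ite_eq' (Finset.range (k+1)) 0 (fun y => (α+p) * W (k-y))]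
    rw [if_pos (by simp)]
    norm_num
  have hderW : ∀ k, cv (der W) (psc α p μ) k = κ k := by
    intro k
    have hpr := prod_rule W (psc α p μ) k
    rw [hL2 (k+1)] at hpr
    have hz : dlt (k+1) = 0 := by unfold dlt; rw [if_neg (by omega)]
    rw [hz, mul_zero] at hpr
    have h4 : cv W (fun y => -(der (psc α p μ) y)) k = -(cv W (der (psc α p μ)) k) :=
      cv_neg _ _ k
    have h5 := hκD k
    rw [h4] at h5
    linarith
  -- L4
  have hWκ : ∀ k, cv W κ k = ((k:ℝ)+1) * W (k+1) := by
    intro k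
    calc cv W κ k = cv W (cv (der W) (psc α p μ)) k :=
          cv_congr_right _ (fun n => (hderW n).symm) k
      _ = cv W (cv (psc α p μ) (der W)) k := cv_congr_right _ (fun n => cv_comm _ _ n) k
      _ = cv (cv W (psc α p μ)) (der W) k := (cv_assoc _ _ _ k).symm
      _ = cv dlt (der W) k := cv_congr_left _ (fun n => hL2 n) k
      _ = cv (der W) dlt k := cv_comm _ _ k
      _ = der W k := cv_dlt _ k
      _ = ((k:ℝ)+1) * W (k+1) := rfl
  -- π = c W
  have hπW : ∀ x, π x = (α * μ 0) * W x := by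
    intro x
    induction x using Nat.strong_induction_on with
    | _ x ih =>
      match x with
      | 0 =>
        rw [hπ0, hW 0, Finset.sum_range_one, hΔW0]
        field_simp
      | (k+1) =>
        rw [hπ k]
        have hsum : (∑ y ∈ Finset.range (k+1), π (k-y) * κ y) = (α*μ 0) * cv W κ k := by
          unfold cv
          rw [Finset.mul_sum]
          apply Finset.sum_congr rfl
          intro y _
          rw [ih (k-y) (by omega)]
          ring
        rw [hsum, hWκ k]
        have hk : ((k:ℝ)+1) ≠ 0 := by positivity
        field_simp
  -- π ⋆ ϖ = δ
  have hπϖ : ∀ k, cv π ϖ k = dlt k := by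
    intro k
    match k with
    | 0 =>
      unfold cv dlt
      simp [hπ0, hϖ0]
    | (k+1) =>
      have hderπ : ∀ n, der π n = cv π κ n := by
        intro n
        have hn : ((n:ℝ)+1) ≠ 0 := by positivity
        unfold der
        rw [hπ n, mul_comm, div_mul_cancel₀ _ hn]
        rfl
      have hderϖ : ∀ n, der ϖ n = -(cv ϖ κ n) := by
        intro n
        have hn : ((n:ℝ)+1) ≠ 0 := by positivity
        unfold der
        rw [hϖ n, mul_comm, div_mul_cancel₀ _ hn]
        rfl
      have hpr := prod_rule π ϖ k
      have h1 : cv (der π) ϖ k = cv π (cv ϖ κ) k := by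
        calc cv (der π) ϖ k = cv (cv π κ) ϖ k := cv_congr_left _ hderπ k
          _ = cv π (cv κ ϖ) k := cv_assoc _ _ _ k
          _ = cv π (cv ϖ κ) k := cv_congr_right _ (fun n => cv_comm _ _ n) k
      have h2 : cv π (der ϖ) k = -(cv π (cv ϖ κ) k) := by
        calc cv π (der ϖ) k = cv π (fun n => -(cv ϖ κ n)) k := cv_congr_right _ hderϖ k
          _ = -(cv π (cv ϖ κ) k) := cv_neg _ _ k
      rw [h1, h2] at hpr
      have hk : ((k:ℝ)+1) ≠ 0 := by positivity
      have hz : cv π ϖ (k+1) = 0 := by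
        have h3 : ((k:ℝ)+1) * cv π ϖ (k+1) = ((k:ℝ)+1) * 0 := by rw [hpr]; ring
        exact mul_left_cancel₀ hk h3
      rw [hz]
      unfold dlt
      rw [if_neg (by omega)]
  have hWϖ : ∀ l, (α * μ 0) * cv W ϖ l = dlt l := by
    intro l
    rw [← hπϖ l]
    unfold cv
    rw [Finset.mul_sum]
    apply Finset.sum_congr rfl
    intro y _
    rw [hπW (l-y)]
    ring
  -- ψ 0
  have hψ0 : ψ 0 = α * μ 0 := by
    rw [hψ 0]
    have ht : (∑' j : ℕ, μ j * (0:ℝ) ^ j) = μ 0 := by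
      rw [tsum_eq_single 0]
      · norm_num
      · intro j hj
        simp [zero_pow hj]
    rw [ht]
    ring
  refine ⟨?_, ?_, ?_⟩
  · intro s hs
    obtain ⟨hs0, hs1⟩ := hs
    have habs : |s| < 1 := by rw [abs_of_nonneg hs0]; exact hs1
    have hνsum : Summable ν := by
      by_contra hns
      rw [tsum_eq_zero_of_not_summable hns] at hν_sum
      norm_num at hν_sum
    have hEs : Summable E := (hνsum.mul_left m).congr hνe
    have hu : Summable (fun n : ℕ => (n:ℝ) * μ n) := by
      rw [← summable_nat_add_iff 1]
      exact hEs.congr fun n => by rw [hEdef]; push_cast; ring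
    have hbound : ∀ (n : ℕ) (z : ℝ), |z| ≤ 1 → ‖μ n * ((n:ℝ) * z ^ (n-1))‖ ≤ (n:ℝ) * μ n := by
      intro n z hz
      rw [Real.norm_eq_abs, abs_mul, abs_mul, abs_of_nonneg (hμ_nonneg n), Nat.abs_cast,
        abs_pow]
      have h1 : |z| ^ (n-1) ≤ 1 := pow_le_one₀ (abs_nonneg z) hz
      calc μ n * ((n:ℝ) * |z| ^ (n-1)) ≤ μ n * ((n:ℝ) * 1) := by
            gcongr
            exact hμ_nonneg n
        _ = (n:ℝ) * μ n := by ring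
    have hball : s ∈ Metric.ball (0:ℝ) 1 := by
      rw [Metric.mem_ball, Real.dist_eq, sub_zero]
      exact habs
    have hder : HasDerivAt (fun z : ℝ => ∑' j : ℕ, μ j * z ^ j)
        (∑' n : ℕ, μ n * ((n:ℝ) * s ^ (n-1))) s := by
      apply hasDerivAt_tsum_of_isPreconnected hu Metric.isOpen_ball
        (convex_ball (0:ℝ) 1).isPreconnected
        (g := fun n z => μ n * z ^ n) (g' := fun n z => μ n * ((n:ℝ) * z ^ (n-1)))
        (y₀ := (0:ℝ)) ?_ ?_ ?_ ?_ hball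
      · intro n z _
        exact (hasDerivAt_pow n z).const_mul (μ n)
      · intro n z hz
        rw [Metric.mem_ball, Real.dist_eq, sub_zero] at hz
        exact hbound n z (le_of_lt hz)
      · rw [Metric.mem_ball]
        simp
      · apply summable_of_ne_finset_zero (s := ({0} : Finset ℕ))
        intro n hn
        simp only [Finset.mem_singleton] at hn
        simp [zero_pow hn]
    have hψder : HasDerivAt ψ
        (α * ((∑' n : ℕ, μ n * ((n:ℝ) * s ^ (n-1))) - 1) - p * 1) s := by
      have hψfun : ψ = fun z : ℝ => α * ((∑' j : ℕ, μ j * z ^ j) - z) - p * z := funext hψ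
      rw [hψfun]
      exact ((hder.sub (hasDerivAt_id s)).const_mul α).sub ((hasDerivAt_id s).const_mul p)
    have hgsum : Summable (fun n : ℕ => μ n * ((n:ℝ) * s ^ (n-1))) :=
      Summable.of_norm_bounded hu (fun n => hbound n s (le_of_lt habs))
    have hshift : (∑' n : ℕ, μ n * ((n:ℝ) * s ^ (n-1))) = ∑' n : ℕ, E n * s ^ n := by
      have h0 : μ 0 * (((0:ℕ):ℝ) * s ^ (0-1)) = 0 := by norm_num
      rw [hgsum.tsum_eq_zero_add, h0, zero_add]
      exact tsum_congr fun n => by rw [hEdef]; push_cast; ring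
    have hν_tsum : (∑' j : ℕ, ν j * s ^ j) = (∑' j : ℕ, E j * s ^ j) / m := by
      rw [← tsum_div_const]
      apply tsum_congr
      intro j
      have hj : ν j = E j / m := by rw [← hνe j]; field_simp
      rw [hj]
      ring
    rw [hφ s, hν_tsum, hψder.deriv, hshift, hβm, hqm]
    field_simp
    ring
  · intro x
    rw [hψ0]
    exact hπW x
  · intro x y
    rw [hH x y]
    by_cases hxy : x < y
    · rw [if_pos hxy]
      have h0mem : 0 ∈ Finset.range (y - x) := by
        simp only [Finset.mem_range]
        omega
      have hside : ∀ l ∈ Finset.range (y - x), l ≠ 0 →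
          (π (y - x - 1 - l) * ∑ mm ∈ Finset.range (l+1), W (l - mm) * ϖ mm) / ((l:ℝ) + x + 1) = 0 := by
        intro l _ hl0
        have h := hWϖ l
        unfold dlt at h
        rw [if_neg hl0] at h
        have h2 : cv W ϖ l = 0 := by
          rcases mul_eq_zero.mp h with h' | h'
          · exact absurd h' hc
          · exact h'
        have h3 : (∑ mm ∈ Finset.range (l+1), W (l - mm) * ϖ mm) = 0 := h2
        rw [h3]
        simp
      rw [Finset.sum_eq_single_of_mem 0 h0mem hside]
      · have h0 : (∑ mm ∈ Finset.range (0+1), W (0 - mm) * ϖ mm) = W 0 := by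
          rw [Finset.sum_range_one, hϖ0]
          norm_num
        rw [h0]
        rw [hπW (y - x - 1 - 0), hW 0, Finset.sum_range_one, hΔW0]
        have hx1 : ((x:ℝ)+1) ≠ 0 := by positivity
        push_cast
        rw [Nat.sub_zero]
        field_simp
        ring
    · rw [if_neg hxy]
      have h0 : y - x = 0 := by omega
      rw [h0]
      simp
end
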